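/- With Ĩ_{X_j} = [[1, b_j/2],[0, 1/2]] and β̃_{X_j} = [[1/2, 0],[-b_j/2, 0]] where b_j = 2X_j − 1, for any 0 ≤ j ≤ n−1 one has Ĩ_{X_0}···Ĩ_{X_{j-1}} β̃_{X_j} = [[ 1/2 − (b_j/2)·Σ_{i=0}^{j−1} b_i/2^{j−i}, 0], [ −b_j/2^{j+1}, 0]]. -/
import Mathlib


/-- `b j = 2 X_j − 1 ∈ {−1, 1}`. -/
noncomputable def bsgn (X : ℕ → Bool) (j : ℕ) : ℝ := if X j then 1 else -1

/-- The matrix Ĩ_{X_j} = [[1, b_j/2],[0, 1/2]]. -/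
noncomputable def Itil (X : ℕ → Bool) (j : ℕ) : Matrix (Fin 2) (Fin 2) ℝ :=
  !![1, bsgn X j / 2; 0, 1/2]

/-- The matrix β̃_{X_j} = [[1/2, 0],[−b_j/2, 0]]. -/
noncomputable def betatil (X : ℕ → Bool) (j : ℕ) : Matrix (Fin 2) (Fin 2) ℝ :=
  !![1/2, 0; -(bsgn X j / 2), 0]

lemma Itil_prod (X : ℕ → Bool) (j : ℕ) :
    (List.ofFn fun i : Fin j => Itil X i).prod =
      !![1, ∑ i ∈ Finset.range j, bsgn X i / 2 ^ (j - i); 0, (1/2 : ℝ) ^ j] := by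
  induction j with
  | zero => simp [Matrix.one_fin_two]
  | succ n ih =>
    rw [List.ofFn_succ', List.concat_eq_append, List.prod_append]
    simp only [Fin.coe_castSucc] at *
    rw [ih]
    have hsum : ∑ i ∈ Finset.range (n+1), bsgn X i / 2 ^ (n + 1 - i)
        = (∑ i ∈ Finset.range n, bsgn X i / 2 ^ (n - i)) * (1/2) + bsgn X n / 2 := by
      rw [Finset.sum_range_succ, Finset.sum_mul]
      congr 1
      · apply Finset.sum_congr rfl
        intro i hi
        have hi' := Finset.mem_range.mp hi
        have : n + 1 - i = (n - i) + 1 := by omega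
        rw [this, pow_succ]
        ring
      · simp
    rw [hsum]
    ext a b
    fin_cases a <;> fin_cases b <;>
      simp [Itil, Matrix.mul_fin_two, Finset.sum_mul] <;> ring

theorem Itil_prod_betatil (X : ℕ → Bool) (j : ℕ) :
    (List.ofFn fun i : Fin j => Itil X i).prod * betatil X j =
      !![1/2 - (bsgn X j / 2) * ∑ i ∈ Finset.range j, bsgn X i / 2 ^ (j - i), 0;
         -(bsgn X j / 2 ^ (j + 1)), 0] := by
  rw [Itil_prod, betatil, Matrix.mul_fin_two]
  ext a b
  fin_cases a <;> fin_cases b <;> simp [pow_succ] <;> ring
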